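/- arXiv:2507.07279 — 5 statements merged into one kernel-verified Lean document; each statement's English description precedes it below -/
import Mathlib

section
/- Let n ≥ 1. There exists a positive smooth path of diffeomorphisms (g_t)_{t∈[0,1]} of ℝ^{2n+1} which is a loop based at the identity, i.e. g_0 = g_1 = id. -/
open Set Function

noncomputable section

/-- `ℝ^{2n+1}` with coordinates `(x, y, z) ∈ ℝⁿ × ℝⁿ × ℝ`. -/
abbrev E (n : ℕ) : Type := (Fin n → ℝ) × (Fin n → ℝ) × ℝ

/-- The standard contact form `α₀ = dz + ∑ xᵢ dyᵢ`: at the point `p = (x,y,z)` it sends the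
vector `v = (u,w,c)` to `c + ∑ xᵢ wᵢ`. -/
def α₀ (n : ℕ) (p v : E n) : ℝ := v.2.2 + ∑ i, p.1 i * v.2.1 i

/-- A diffeomorphism of `ℝ^{2n+1}`: a smooth bijection with smooth inverse. -/
def IsDiffeo (n : ℕ) (f : E n → E n) : Prop :=
  ContDiff ℝ (⊤ : ℕ∞) f ∧ ∃ g : E n → E n, ContDiff ℝ (⊤ : ℕ∞) g ∧ LeftInverse g f ∧ RightInverse g f

/-- A smooth path of diffeomorphisms, parametrized by `t ∈ [0,1]` (smoothly extended to `ℝ`):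
a smooth map such that `g_t := g(t,·)` is a diffeomorphism for every `t ∈ [0,1]`. -/
def IsSmoothPath (n : ℕ) (g : ℝ × E n → E n) : Prop :=
  ContDiff ℝ (⊤ : ℕ∞) g ∧ ∀ t ∈ Icc (0:ℝ) 1, IsDiffeo n (fun p => g (t, p))

/-- The time derivative `∂ₜ g(t,q)` of a path. -/
def pathDeriv (n : ℕ) (g : ℝ × E n → E n) (t : ℝ) (q : E n) : E n :=
  deriv (fun s => g (s, q)) t

/-- A path is positive if `α₀(g(t,q))(∂ₜ g(t,q)) > 0` for all `t ∈ [0,1]` and all `q`. -/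
def IsPositivePath (n : ℕ) (g : ℝ × E n → E n) : Prop :=
  ∀ t ∈ Icc (0:ℝ) 1, ∀ q, 0 < α₀ n (g (t, q)) (pathDeriv n g t q)

/-- A path is null if `α₀(g(t,q))(∂ₜ g(t,q)) = 0` for all `t ∈ [0,1]` and all `q`. -/
def IsNullPath (n : ℕ) (g : ℝ × E n → E n) : Prop :=
  ∀ t ∈ Icc (0:ℝ) 1, ∀ q, α₀ n (g (t, q)) (pathDeriv n g t q) = 0

/-- A path is compactly supported if all `g(t,·)` are the identity outside a fixed compact set. -/
def IsCompactlySupportedPath (n : ℕ) (g : ℝ × E n → E n) : Prop :=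
  ∃ K : Set (E n), IsCompact K ∧ ∀ t ∈ Icc (0:ℝ) 1, ∀ p ∉ K, g (t, p) = p

/-- `f` is connected to the identity by a smooth path of diffeomorphisms. -/
def ConnToId (n : ℕ) (f : E n → E n) : Prop :=
  ∃ g : ℝ × E n → E n, IsSmoothPath n g ∧ (∀ p, g (0, p) = p) ∧ (∀ p, g (1, p) = f p)

/-- `f` is connected to the identity by a compactly supported smooth path of diffeomorphisms. -/
def ConnToIdCompactlySupported (n : ℕ) (f : E n → E n) : Prop :=
  ∃ g : ℝ × E n → E n, IsSmoothPath n g ∧ IsCompactlySupportedPath n g ∧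
    (∀ p, g (0, p) = p) ∧ (∀ p, g (1, p) = f p)

/-- There exists a positive loop of diffeomorphisms of `ℝ^{2n+1}` based at the
identity. -/
theorem exists_positive_loop (n : ℕ) (hn : 1 ≤ n) :
    ∃ g : ℝ × E n → E n, IsSmoothPath n g ∧ IsPositivePath n g ∧
      (∀ p, g (0, p) = p) ∧ (∀ p, g (1, p) = p) := by
  classical
  set a : ℝ → ℝ := fun t => Real.sin (2 * Real.pi * t) with ha
  set b : ℝ → ℝ := fun t => 1 - Real.cos (2 * Real.pi * t) with hb
  set c : ℝ → ℝ := fun t => Real.sin (4 * Real.pi * t) / 4 with hc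
  have ha' : ∀ t : ℝ, HasDerivAt a (Real.cos (2 * Real.pi * t) * (2 * Real.pi)) t := by
    intro t
    have h1 : HasDerivAt (fun s : ℝ => 2 * Real.pi * s) (2 * Real.pi) t := by
      simpa using (hasDerivAt_id t).const_mul (2 * Real.pi)
    exact (Real.hasDerivAt_sin (2 * Real.pi * t)).comp t h1
  have hb' : ∀ t : ℝ, HasDerivAt b (Real.sin (2 * Real.pi * t) * (2 * Real.pi)) t := by
    intro t
    have h1 : HasDerivAt (fun s : ℝ => 2 * Real.pi * s) (2 * Real.pi) t := by
      simpa using (hasDerivAt_id t).const_mul (2 * Real.pi)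
    have := ((Real.hasDerivAt_cos (2 * Real.pi * t)).comp t h1).const_sub 1
    simpa [hb, mul_comm, mul_left_comm, neg_mul] using this
  have hc' : ∀ t : ℝ, HasDerivAt c (Real.cos (4 * Real.pi * t) * Real.pi) t := by
    intro t
    have h1 : HasDerivAt (fun s : ℝ => 4 * Real.pi * s) (4 * Real.pi) t := by
      simpa using (hasDerivAt_id t).const_mul (4 * Real.pi)
    have := ((Real.hasDerivAt_sin (4 * Real.pi * t)).comp t h1).div_const 4
    exact this.congr_deriv (by ring)
  have hsa : ContDiff ℝ (⊤ : ℕ∞) a := Real.contDiff_sin.comp (contDiff_const.mul contDiff_id)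
  have hsb : ContDiff ℝ (⊤ : ℕ∞) b :=
    contDiff_const.sub (Real.contDiff_cos.comp (contDiff_const.mul contDiff_id))
  have hsc : ContDiff ℝ (⊤ : ℕ∞) c :=
    (Real.contDiff_sin.comp (contDiff_const.mul contDiff_id)).div_const 4
  refine ⟨fun tp => (fun i => tp.2.1 i + a tp.1,
                     fun i => tp.2.2.1 i + b tp.1,
                     tp.2.2.2 + (n : ℝ) * c tp.1 - (∑ i, tp.2.1 i) * b tp.1),
    ⟨?_, ?_⟩, ?_, ?_, ?_⟩
  · -- smoothness
    refine ContDiff.prodMk ?_ (ContDiff.prodMk ?_ ?_)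
    · exact contDiff_pi.2 fun i =>
        ((contDiff_apply ℝ ℝ i).comp (contDiff_fst.comp contDiff_snd)).add
          (hsa.comp contDiff_fst)
    · exact contDiff_pi.2 fun i =>
        ((contDiff_apply ℝ ℝ i).comp (contDiff_fst.comp (contDiff_snd.comp contDiff_snd))).add
          (hsb.comp contDiff_fst)
    · refine ContDiff.sub (ContDiff.add
        (contDiff_snd.comp (contDiff_snd.comp contDiff_snd))
        (contDiff_const.mul (hsc.comp contDiff_fst))) ?_
      exact (ContDiff.sum fun i _ =>
        (contDiff_apply ℝ ℝ i).comp (contDiff_fst.comp contDiff_snd)).mul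
        (hsb.comp contDiff_fst)
  · -- diffeo for each t
    intro t _
    show IsDiffeo n (fun p : E n => (fun i => p.1 i + a t, fun i => p.2.1 i + b t,
      p.2.2 + (n : ℝ) * c t - (∑ i, p.1 i) * b t))
    refine ⟨?_, fun p => (fun i => p.1 i - a t, fun i => p.2.1 i - b t,
        p.2.2 - (n : ℝ) * c t + (∑ i, p.1 i - (n : ℝ) * a t) * b t), ?_, ?_, ?_⟩
    · refine ContDiff.prodMk ?_ (ContDiff.prodMk ?_ ?_)
      · exact contDiff_pi.2 fun i =>
          ((contDiff_apply ℝ ℝ i).comp contDiff_fst).add contDiff_const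
      · exact contDiff_pi.2 fun i =>
          ((contDiff_apply ℝ ℝ i).comp (contDiff_fst.comp contDiff_snd)).add contDiff_const
      · exact ((contDiff_snd.comp contDiff_snd).add contDiff_const).sub
          ((ContDiff.sum fun i _ => (contDiff_apply ℝ ℝ i).comp contDiff_fst).mul contDiff_const)
    · refine ContDiff.prodMk ?_ (ContDiff.prodMk ?_ ?_)
      · exact contDiff_pi.2 fun i =>
          ((contDiff_apply ℝ ℝ i).comp contDiff_fst).sub contDiff_const
      · exact contDiff_pi.2 fun i =>
          ((contDiff_apply ℝ ℝ i).comp (contDiff_fst.comp contDiff_snd)).sub contDiff_const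
      · exact (((contDiff_snd.comp contDiff_snd).sub contDiff_const)).add
          (((ContDiff.sum fun i _ => (contDiff_apply ℝ ℝ i).comp contDiff_fst).sub
            contDiff_const).mul contDiff_const)
    · intro p
      refine Prod.ext ?_ (Prod.ext ?_ ?_)
      · funext i; simp
      · funext i; simp
      · simp [Finset.sum_add_distrib, Finset.sum_sub_distrib]
        ring
    · intro p
      refine Prod.ext ?_ (Prod.ext ?_ ?_)
      · funext i; simp
      · funext i; simp
      · simp [Finset.sum_add_distrib, Finset.sum_sub_distrib]
        ring
  · -- positivity
    intro t _ q
    have hder : pathDeriv n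
        (fun tp => (fun i => tp.2.1 i + a tp.1,
                    fun i => tp.2.2.1 i + b tp.1,
                    tp.2.2.2 + (n : ℝ) * c tp.1 - (∑ i, tp.2.1 i) * b tp.1)) t q =
        (fun _ => Real.cos (2 * Real.pi * t) * (2 * Real.pi),
         fun _ => Real.sin (2 * Real.pi * t) * (2 * Real.pi),
         (n : ℝ) * (Real.cos (4 * Real.pi * t) * Real.pi)
           - (∑ i, q.1 i) * (Real.sin (2 * Real.pi * t) * (2 * Real.pi))) := by
      refine HasDerivAt.deriv ?_
      show HasDerivAt (fun s : ℝ => ((fun i => q.1 i + a s, fun i => q.2.1 i + b s,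
        q.2.2 + (n : ℝ) * c s - (∑ i, q.1 i) * b s) : E n)) _ t
      refine HasDerivAt.prodMk ?_ (HasDerivAt.prodMk ?_ ?_)
      · exact hasDerivAt_pi.2 fun i => (ha' t).const_add _
      · exact hasDerivAt_pi.2 fun i => (hb' t).const_add _
      · exact (((hc' t).const_mul _).const_add _).sub ((hb' t).const_mul _)
    rw [hder]
    simp only [α₀]
    have hid : Real.cos (4 * Real.pi * t) =
        1 - 2 * Real.sin (2 * Real.pi * t) ^ 2 := by
      have h2 : (4 * Real.pi * t) = 2 * (2 * Real.pi * t) := by ring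
      have h3 := Real.sin_sq_add_cos_sq (2 * Real.pi * t)
      rw [h2, Real.cos_two_mul']
      linarith
    have hπ : (0:ℝ) < Real.pi := Real.pi_pos
    have hn' : (1:ℝ) ≤ (n:ℝ) := by exact_mod_cast hn
    have hsum : ∑ i : Fin n, (q.1 i + a t) * (Real.sin (2 * Real.pi * t) * (2 * Real.pi)) =
        (∑ i, q.1 i) * (Real.sin (2 * Real.pi * t) * (2 * Real.pi)) +
        (n : ℝ) * (a t * (Real.sin (2 * Real.pi * t) * (2 * Real.pi))) := by
      rw [← Finset.sum_mul, Finset.sum_add_distrib, Finset.sum_const, Finset.card_univ,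
        Fintype.card_fin, add_mul, nsmul_eq_mul]
      ring
    rw [hsum, hid, ha]
    have : (0:ℝ) < (n:ℝ) * Real.pi := by positivity
    nlinarith [this]
  · intro p
    refine Prod.ext ?_ (Prod.ext ?_ ?_)
    · funext i; simp [ha]
    · funext i; simp [hb]
    · simp [ha, hb, hc]
  · intro p
    have h4 : Real.sin (4 * Real.pi) = 0 := by
      have h5 : (4:ℝ) * Real.pi = 2 * Real.pi + 2 * Real.pi := by ring
      rw [h5, Real.sin_add, Real.sin_two_pi, Real.cos_two_pi]; ring
    refine Prod.ext ?_ (Prod.ext ?_ ?_)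
    · funext i; simp [ha]
    · funext i; simp [hb]
    · simp [ha, hb, hc, h4]
end
end

section
/- Let n ≥ 1. For every ε > 0, every k ∈ ℕ and every compact set C ⊂ ℝ^{2n+1}, there exists a positive smooth path of diffeomorphisms (g_t)_{t∈[0,1]} of ℝ^{2n+1} with g_0 = g_1 = id such that for all t ∈ [0,1], all j ≤ k and all p ∈ C, the j-th iterated Fréchet derivative of the map q ↦ g(t,q) − q at p has norm less than ε. -/
open Set Function

noncomputable section

namespace SL

/-- frequency -/
def om : ℝ := 2 * Real.pi

/-- rotation angle τ(t) -/
def tf (c t : ℝ) : ℝ := c * Real.sin (om * t)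
/-- shift a(t) -/
def af (c t : ℝ) : ℝ := c * (Real.sin (om * t) + Real.sin (2 * (om * t)))
/-- F(t) = ∫ τ' a -/
def Ff (c t : ℝ) : ℝ := c ^ 2 * (Real.sin (om * t) ^ 2 / 2 + 2 / 3 * (1 - Real.cos (om * t) ^ 3))
/-- G(t) = ∫ τ' a² -/
def Gf (c t : ℝ) : ℝ :=
  c ^ 3 * (5 / 3 * Real.sin (om * t) ^ 3 - 4 / 5 * Real.sin (om * t) ^ 5 + om * t / 2
    - Real.sin (4 * (om * t)) / 8)
/-- the constant M = πc³/2 -/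
def Mf (c : ℝ) : ℝ := Real.pi * c ^ 3 / 2

def df (c t x y : ℝ) : ℝ := Mf c * t - (tf c t * (x ^ 2 + y ^ 2) + 2 * x * Ff c t + Gf c t) / 2

def Xf (c t x y : ℝ) : ℝ := (x + af c t) * Real.cos (tf c t) - y * Real.sin (tf c t)
def Yf (c t x y : ℝ) : ℝ := (x + af c t) * Real.sin (tf c t) + y * Real.cos (tf c t)
def Zf (c t x y z : ℝ) : ℝ :=
  z + ((x + af c t) * y - Xf c t x y * Yf c t x y) / 2 + df c t x y

/-- time derivatives -/
def tf' (c t : ℝ) : ℝ := c * (Real.cos (om * t) * om)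
def af' (c t : ℝ) : ℝ := c * (Real.cos (om * t) * om + Real.cos (2 * (om * t)) * (2 * om))
def Xd (c t x y : ℝ) : ℝ :=
  af' c t * Real.cos (tf c t) - (x + af c t) * (Real.sin (tf c t) * tf' c t)
    - y * (Real.cos (tf c t) * tf' c t)
def Yd (c t x y : ℝ) : ℝ :=
  af' c t * Real.sin (tf c t) + (x + af c t) * (Real.cos (tf c t) * tf' c t)
    - y * (Real.sin (tf c t) * tf' c t)
def dd' (c t x y : ℝ) : ℝ :=
  Mf c - (tf' c t * (x ^ 2 + y ^ 2) + 2 * x * (tf' c t * af c t) + tf' c t * (af c t) ^ 2) / 2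
def Zd (c t x y : ℝ) : ℝ :=
  (af' c t * y - (Xd c t x y * Yf c t x y + Xf c t x y * Yd c t x y)) / 2 + dd' c t x y

lemma hasDerivAt_tf (c t : ℝ) : HasDerivAt (tf c) (tf' c t) t := by
  have h : HasDerivAt (fun t : ℝ => om * t) om t := by
    simpa using (hasDerivAt_id t).const_mul om
  exact h.sin.const_mul c

lemma hasDerivAt_af (c t : ℝ) : HasDerivAt (af c) (af' c t) t := by
  have h : HasDerivAt (fun t : ℝ => om * t) om t := by
    simpa using (hasDerivAt_id t).const_mul om
  have h2 : HasDerivAt (fun t : ℝ => 2 * (om * t)) (2 * om) t := by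
    simpa [mul_assoc] using h.const_mul 2
  exact (h.sin.add h2.sin).const_mul c

lemma hasDerivAt_Ff (c t : ℝ) : HasDerivAt (Ff c) (tf' c t * af c t) t := by
  have h : HasDerivAt (fun t : ℝ => om * t) om t := by
    simpa using (hasDerivAt_id t).const_mul om
  have hs := h.sin
  have hc := h.cos
  have h1 : HasDerivAt (fun t : ℝ => Real.sin (om * t) ^ 2 / 2 + 2 / 3 * (1 - Real.cos (om * t) ^ 3))
      ((2 * Real.sin (om * t) ^ 1 * (Real.cos (om * t) * om)) / 2
        + 2 / 3 * (0 - 3 * Real.cos (om * t) ^ 2 * (-Real.sin (om * t) * om))) t :=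
    ((hs.pow 2).div_const 2).add (((hasDerivAt_const t (1:ℝ)).sub (hc.pow 3)).const_mul (2/3))
  have := h1.const_mul (c ^ 2)
  have h2 : (fun t => c ^ 2 * (Real.sin (om * t) ^ 2 / 2 + 2 / 3 * (1 - Real.cos (om * t) ^ 3)))
      = Ff c := by funext u; simp [Ff]
  rw [h2] at this
  refine this.congr_deriv (Eq.symm ?_)
  simp only [tf', af]
  rw [Real.sin_two_mul]
  ring

lemma hasDerivAt_Gf (c t : ℝ) : HasDerivAt (Gf c) (tf' c t * af c t ^ 2) t := by
  have h : HasDerivAt (fun t : ℝ => om * t) om t := by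
    simpa using (hasDerivAt_id t).const_mul om
  have h4 : HasDerivAt (fun t : ℝ => 4 * (om * t)) (4 * om) t := by
    simpa [mul_assoc] using h.const_mul 4
  have hs := h.sin
  have h1 : HasDerivAt (fun t : ℝ => 5 / 3 * Real.sin (om * t) ^ 3 - 4 / 5 * Real.sin (om * t) ^ 5
      + om * t / 2 - Real.sin (4 * (om * t)) / 8)
      (5 / 3 * (3 * Real.sin (om * t) ^ 2 * (Real.cos (om * t) * om))
        - 4 / 5 * (5 * Real.sin (om * t) ^ 4 * (Real.cos (om * t) * om))
        + om / 2 - (Real.cos (4 * (om * t)) * (4 * om)) / 8) t := by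
    exact ((((hs.pow 3).const_mul (5/3)).sub ((hs.pow 5).const_mul (4/5))).add
      (h.div_const 2)).sub (h4.sin.div_const 8)
  have := h1.const_mul (c ^ 3)
  have h2 : (fun t => c ^ 3 * (5 / 3 * Real.sin (om * t) ^ 3 - 4 / 5 * Real.sin (om * t) ^ 5
      + om * t / 2 - Real.sin (4 * (om * t)) / 8)) = Gf c := by funext u; simp [Gf]
  rw [h2] at this
  refine this.congr_deriv (Eq.symm ?_)
  -- identity: tf' * af² = c³ ω (5 sin²cos − 4 sin⁴cos + 1/2 − cos(4u)/2)
  have hc4 : Real.cos (4 * (om * t)) = 1 - 2 * Real.sin (2 * (om * t)) ^ 2 := by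
    rw [show (4 : ℝ) * (om * t) = 2 * (2 * (om * t)) by ring, Real.cos_two_mul']
    have := Real.sin_sq_add_cos_sq (2 * (om * t)); linarith
  have hs2 : Real.sin (2 * (om * t)) = 2 * Real.sin (om * t) * Real.cos (om * t) :=
    Real.sin_two_mul (om * t)
  simp only [tf', af]
  rw [hc4, hs2]
  have hp := Real.sin_sq_add_cos_sq (om * t)
  linear_combination (4 * c ^ 3 * om * Real.sin (om * t) ^ 2 * Real.cos (om * t)) * hp


lemma hasDerivAt_df (c t x y : ℝ) :
    HasDerivAt (fun t => df c t x y) (dd' c t x y) t := by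
  have h1 : HasDerivAt (fun t : ℝ => Mf c * t) (Mf c) t := by
    simpa using (hasDerivAt_id t).const_mul (Mf c)
  have h := h1.sub (((((hasDerivAt_tf c t).mul_const (x ^ 2 + y ^ 2)).add
    ((hasDerivAt_Ff c t).const_mul (2 * x))).add (hasDerivAt_Gf c t)).div_const 2)
  have hfun : (fun u : ℝ => Mf c * u - (tf c u * (x ^ 2 + y ^ 2) + 2 * x * Ff c u + Gf c u) / 2)
      = fun u => df c u x y := by funext u; simp only [df]
  rw [← hfun]
  exact h.congr_deriv rfl

lemma hasDerivAt_Xf (c t x y : ℝ) :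
    HasDerivAt (fun t => Xf c t x y) (Xd c t x y) t := by
  have ht := hasDerivAt_tf c t
  have h := (((hasDerivAt_const t x).add (hasDerivAt_af c t)).mul ht.cos).sub
    (ht.sin.const_mul y)
  have hfun : (fun u : ℝ => (x + af c u) * Real.cos (tf c u) - y * Real.sin (tf c u))
      = fun u => Xf c u x y := by funext u; simp only [Xf]
  rw [← hfun]
  refine h.congr_deriv (Eq.symm ?_)
  simp only [Xd, Pi.add_apply]; ring

lemma hasDerivAt_Yf (c t x y : ℝ) :
    HasDerivAt (fun t => Yf c t x y) (Yd c t x y) t := by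
  have ht := hasDerivAt_tf c t
  have h := (((hasDerivAt_const t x).add (hasDerivAt_af c t)).mul ht.sin).add
    (ht.cos.const_mul y)
  have hfun : (fun u : ℝ => (x + af c u) * Real.sin (tf c u) + y * Real.cos (tf c u))
      = fun u => Yf c u x y := by funext u; simp only [Yf]
  rw [← hfun]
  refine h.congr_deriv (Eq.symm ?_)
  simp only [Yd, Pi.add_apply]; ring

lemma hasDerivAt_Zf (c t x y z : ℝ) :
    HasDerivAt (fun t => Zf c t x y z) (Zd c t x y) t := by
  have h := ((hasDerivAt_const t z).add
    (((((hasDerivAt_const t x).add (hasDerivAt_af c t)).mul_const y).sub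
      ((hasDerivAt_Xf c t x y).mul (hasDerivAt_Yf c t x y))).div_const 2)).add
    (hasDerivAt_df c t x y)
  have hfun : (fun u : ℝ => z + ((x + af c u) * y - Xf c u x y * Yf c u x y) / 2 + df c u x y)
      = fun u => Zf c u x y z := by funext u; simp only [Zf]
  rw [← hfun]
  refine h.congr_deriv (Eq.symm ?_)
  simp only [Zd]; ring

/-- The key positivity identity: `Ż + X·Ẏ = M`. -/
lemma key_identity (c t x y : ℝ) :
    Zd c t x y + Xf c t x y * Yd c t x y = Mf c := by
  have hp := Real.sin_sq_add_cos_sq (tf c t)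
  simp only [Zd, Xd, Yd, Xf, Yf, dd']
  linear_combination ((tf' c t * ((x + af c t) ^ 2 + y ^ 2) - af' c t * y) / 2) * hp

/-- inverse scalar identities -/
lemma inv_left_x (c t x y : ℝ) :
    Xf c t x y * Real.cos (tf c t) + Yf c t x y * Real.sin (tf c t) - af c t = x := by
  have hp := Real.sin_sq_add_cos_sq (tf c t)
  simp only [Xf, Yf]
  linear_combination (x + af c t) * hp

lemma inv_left_y (c t x y : ℝ) :
    -(Xf c t x y * Real.sin (tf c t)) + Yf c t x y * Real.cos (tf c t) = y := by
  have hp := Real.sin_sq_add_cos_sq (tf c t)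
  simp only [Xf, Yf]
  linear_combination y * hp

lemma inv_right_X (c t X Y : ℝ) :
    Xf c t (X * Real.cos (tf c t) + Y * Real.sin (tf c t) - af c t)
      (-(X * Real.sin (tf c t)) + Y * Real.cos (tf c t)) = X := by
  have hp := Real.sin_sq_add_cos_sq (tf c t)
  simp only [Xf]
  linear_combination X * hp

lemma inv_right_Y (c t X Y : ℝ) :
    Yf c t (X * Real.cos (tf c t) + Y * Real.sin (tf c t) - af c t)
      (-(X * Real.sin (tf c t)) + Y * Real.cos (tf c t)) = Y := by
  have hp := Real.sin_sq_add_cos_sq (tf c t)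
  simp only [Yf]
  linear_combination Y * hp

/-- boundary values -/
lemma om_pos : 0 < om := by rw [om]; positivity
lemma sin_om : Real.sin om = 0 := by rw [om]; exact Real.sin_two_pi
lemma cos_om : Real.cos om = 1 := by rw [om]; exact Real.cos_two_pi
lemma sin_two_om : Real.sin (2 * om) = 0 := by
  rw [show 2 * om = (4 : ℕ) * Real.pi by push_cast [om]; ring]
  exact Real.sin_nat_mul_pi 4
lemma sin_four_om : Real.sin (4 * om) = 0 := by
  rw [show 4 * om = (8 : ℕ) * Real.pi by push_cast [om]; ring]
  exact Real.sin_nat_mul_pi 8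

lemma tf_zero (c : ℝ) : tf c 0 = 0 := by simp [tf]
lemma tf_one (c : ℝ) : tf c 1 = 0 := by simp [tf, sin_om]
lemma af_zero (c : ℝ) : af c 0 = 0 := by simp [af]
lemma af_one (c : ℝ) : af c 1 = 0 := by simp [af, sin_om, sin_two_om]
lemma Ff_zero (c : ℝ) : Ff c 0 = 0 := by simp [Ff]
lemma Ff_one (c : ℝ) : Ff c 1 = 0 := by simp [Ff, sin_om, cos_om]
lemma Gf_zero (c : ℝ) : Gf c 0 = 0 := by simp [Gf]
lemma Gf_one (c : ℝ) : Gf c 1 = Real.pi * c ^ 3 := by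
  rw [Gf, mul_one, sin_om, sin_four_om]
  simp only [om]; ring
lemma df_zero (c x y : ℝ) : df c 0 x y = 0 := by
  simp [df, tf_zero, Ff_zero, Gf_zero]
lemma df_one (c x y : ℝ) : df c 1 x y = 0 := by
  simp only [df, tf_one, Ff_one, Gf_one, Mf, mul_one]; ring
lemma Xf_zero (c x y : ℝ) : Xf c 0 x y = x := by simp [Xf, tf_zero, af_zero]
lemma Xf_one (c x y : ℝ) : Xf c 1 x y = x := by simp [Xf, tf_one, af_one]
lemma Yf_zero (c x y : ℝ) : Yf c 0 x y = y := by simp [Yf, tf_zero, af_zero]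
lemma Yf_one (c x y : ℝ) : Yf c 1 x y = y := by simp [Yf, tf_one, af_one]
lemma Zf_zero (c x y z : ℝ) : Zf c 0 x y z = z := by
  simp [Zf, Xf_zero, Yf_zero, df_zero, af_zero]
lemma Zf_one (c x y z : ℝ) : Zf c 1 x y z = z := by
  simp [Zf, Xf_one, Yf_one, df_one, af_one]


/-! ### The loop of diffeomorphisms on `E n` -/

variable {n : ℕ}

def gmap (i₀ : Fin n) (c : ℝ) (p : ℝ × E n) : E n :=
  (Function.update p.2.1 i₀ (Xf c p.1 (p.2.1 i₀) (p.2.2.1 i₀)),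
   Function.update p.2.2.1 i₀ (Yf c p.1 (p.2.1 i₀) (p.2.2.1 i₀)),
   Zf c p.1 (p.2.1 i₀) (p.2.2.1 i₀) p.2.2.2)

def ix (i₀ : Fin n) (c t : ℝ) (q : E n) : ℝ :=
  q.1 i₀ * Real.cos (tf c t) + q.2.1 i₀ * Real.sin (tf c t) - af c t

def iy (i₀ : Fin n) (c t : ℝ) (q : E n) : ℝ :=
  -(q.1 i₀ * Real.sin (tf c t)) + q.2.1 i₀ * Real.cos (tf c t)

def ginv (i₀ : Fin n) (c t : ℝ) (q : E n) : E n :=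
  (Function.update q.1 i₀ (ix i₀ c t q),
   Function.update q.2.1 i₀ (iy i₀ c t q),
   q.2.2 - (((ix i₀ c t q + af c t) * iy i₀ c t q - q.1 i₀ * q.2.1 i₀) / 2
     + df c t (ix i₀ c t q) (iy i₀ c t q)))

lemma gmap_left_inv (i₀ : Fin n) (c t : ℝ) :
    LeftInverse (ginv i₀ c t) (fun q => gmap i₀ c (t, q)) := by
  rintro ⟨x, y, z⟩
  have hXY : ∀ v : E n, v = (Function.update x i₀ (Xf c t (x i₀) (y i₀)),
      Function.update y i₀ (Yf c t (x i₀) (y i₀)),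
      Zf c t (x i₀) (y i₀) z) → ginv i₀ c t v = (x, y, z) := by
    rintro v rfl
    have e1 : ix i₀ c t (Function.update x i₀ (Xf c t (x i₀) (y i₀)),
        Function.update y i₀ (Yf c t (x i₀) (y i₀)), Zf c t (x i₀) (y i₀) z) = x i₀ := by
      simp only [ix, Function.update_self]
      exact inv_left_x c t (x i₀) (y i₀)
    have e2 : iy i₀ c t (Function.update x i₀ (Xf c t (x i₀) (y i₀)),
        Function.update y i₀ (Yf c t (x i₀) (y i₀)), Zf c t (x i₀) (y i₀) z) = y i₀ := by
      simp only [iy, Function.update_self]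
      exact inv_left_y c t (x i₀) (y i₀)
    simp only [ginv, e1, e2]
    refine Prod.ext ?_ (Prod.ext ?_ ?_)
    · simp [Function.update_idem]
    · simp [Function.update_idem]
    · simp only [Function.update_self, Zf]
      ring
  exact hXY _ rfl

lemma gmap_right_inv (i₀ : Fin n) (c t : ℝ) :
    Function.RightInverse (ginv i₀ c t) (fun q => gmap i₀ c (t, q)) := by
  rintro ⟨x, y, z⟩
  have e1 : Xf c t (ix i₀ c t (x, y, z)) (iy i₀ c t (x, y, z)) = x i₀ := by
    simp only [ix, iy]; exact inv_right_X c t (x i₀) (y i₀)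
  have e2 : Yf c t (ix i₀ c t (x, y, z)) (iy i₀ c t (x, y, z)) = y i₀ := by
    simp only [ix, iy]; exact inv_right_Y c t (x i₀) (y i₀)
  simp only [gmap, ginv, Function.update_self]
  refine Prod.ext ?_ (Prod.ext ?_ ?_)
  · simp only [Function.update_idem, e1]
    exact Function.update_eq_self i₀ x
  · simp only [Function.update_idem, e2]
    exact Function.update_eq_self i₀ y
  · simp only [Zf, e1, e2]
    ring

/-! ### Smoothness -/

@[fun_prop] lemma contDiff_sin' : ContDiff ℝ (⊤ : ℕ∞) Real.sin := Real.contDiff_sin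
@[fun_prop] lemma contDiff_cos' : ContDiff ℝ (⊤ : ℕ∞) Real.cos := Real.contDiff_cos

lemma contDiff_update {A : Type*} [NormedAddCommGroup A] [NormedSpace ℝ A]
    {f : A → Fin n → ℝ} {s : A → ℝ} (i₀ : Fin n)
    (hf : ContDiff ℝ (⊤ : ℕ∞) f) (hs : ContDiff ℝ (⊤ : ℕ∞) s) :
    ContDiff ℝ (⊤ : ℕ∞) (fun a => Function.update (f a) i₀ (s a)) := by
  rw [contDiff_pi]
  intro i
  rcases eq_or_ne i i₀ with h | h
  · subst h
    rw [show (fun a => Function.update (f a) i (s a) i) = s from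
      funext fun a => Function.update_self i (s a) (f a)]
    exact hs
  · rw [show (fun a => Function.update (f a) i₀ (s a) i) = fun a => f a i from
      funext fun a => Function.update_of_ne h (s a) (f a)]
    exact (contDiff_apply ℝ ℝ i).comp hf

lemma contDiff_Xfc (i₀ : Fin n) (c : ℝ) :
    ContDiff ℝ (⊤ : ℕ∞) (fun p : ℝ × E n => Xf c p.1 (p.2.1 i₀) (p.2.2.1 i₀)) := by
  simp only [Xf, af, tf]
  fun_prop (disch := norm_num)

lemma contDiff_Yfc (i₀ : Fin n) (c : ℝ) :
    ContDiff ℝ (⊤ : ℕ∞) (fun p : ℝ × E n => Yf c p.1 (p.2.1 i₀) (p.2.2.1 i₀)) := by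
  simp only [Yf, af, tf]
  fun_prop (disch := norm_num)

lemma contDiff_Zfc (i₀ : Fin n) (c : ℝ) :
    ContDiff ℝ (⊤ : ℕ∞) (fun p : ℝ × E n => Zf c p.1 (p.2.1 i₀) (p.2.2.1 i₀) p.2.2.2) := by
  simp only [Zf, Xf, Yf, df, Mf, Ff, Gf, af, tf]
  fun_prop (disch := norm_num)

lemma contDiff_gmap (i₀ : Fin n) (c : ℝ) : ContDiff ℝ (⊤ : ℕ∞) (gmap i₀ c) := by
  refine ContDiff.prodMk ?_ (ContDiff.prodMk ?_ ?_)
  · exact contDiff_update i₀ (contDiff_fst.comp contDiff_snd) (contDiff_Xfc i₀ c)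
  · exact contDiff_update i₀ (contDiff_fst.comp (contDiff_snd.comp contDiff_snd))
      (contDiff_Yfc i₀ c)
  · exact contDiff_Zfc i₀ c

lemma contDiff_gmap_slice (i₀ : Fin n) (c t : ℝ) :
    ContDiff ℝ (⊤ : ℕ∞) (fun q : E n => gmap i₀ c (t, q)) :=
  (contDiff_gmap i₀ c).comp (contDiff_const.prodMk contDiff_id)

lemma contDiff_ginv (i₀ : Fin n) (c t : ℝ) : ContDiff ℝ (⊤ : ℕ∞) (ginv i₀ c t) := by
  have hix : ContDiff ℝ (⊤ : ℕ∞) (fun q : E n => ix i₀ c t q) := by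
    simp only [ix]; fun_prop
  have hiy : ContDiff ℝ (⊤ : ℕ∞) (fun q : E n => iy i₀ c t q) := by
    simp only [iy]; fun_prop
  refine ContDiff.prodMk ?_ (ContDiff.prodMk ?_ ?_)
  · exact contDiff_update i₀ contDiff_fst hix
  · exact contDiff_update i₀ (contDiff_fst.comp contDiff_snd) hiy
  · simp only [ix, iy, df, Mf, Ff, Gf, af, tf]
    fun_prop (disch := norm_num)

/-! ### Path derivative and positivity -/

lemma hasDerivAt_gmap (i₀ : Fin n) (c t : ℝ) (q : E n) :
    HasDerivAt (fun s => gmap i₀ c (s, q))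
      ((Pi.single i₀ (Xd c t (q.1 i₀) (q.2.1 i₀)) : Fin n → ℝ),
       (Pi.single i₀ (Yd c t (q.1 i₀) (q.2.1 i₀)) : Fin n → ℝ),
       Zd c t (q.1 i₀) (q.2.1 i₀)) t := by
  refine HasDerivAt.prodMk ?_ (HasDerivAt.prodMk ?_ ?_)
  · show HasDerivAt (fun s => Function.update q.1 i₀ (Xf c s (q.1 i₀) (q.2.1 i₀)))
      (Pi.single i₀ (Xd c t (q.1 i₀) (q.2.1 i₀)) : Fin n → ℝ) t
    rw [hasDerivAt_pi]
    intro i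
    rcases eq_or_ne i i₀ with h | h
    · subst h
      simp only [Function.update_self, Pi.single_eq_same]
      exact hasDerivAt_Xf c t _ _
    · simp only [Function.update_of_ne h, Pi.single_eq_of_ne h]
      exact hasDerivAt_const t _
  · show HasDerivAt (fun s => Function.update q.2.1 i₀ (Yf c s (q.1 i₀) (q.2.1 i₀)))
      (Pi.single i₀ (Yd c t (q.1 i₀) (q.2.1 i₀)) : Fin n → ℝ) t
    rw [hasDerivAt_pi]
    intro i
    rcases eq_or_ne i i₀ with h | h
    · subst h
      simp only [Function.update_self, Pi.single_eq_same]
      exact hasDerivAt_Yf c t _ _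
    · simp only [Function.update_of_ne h, Pi.single_eq_of_ne h]
      exact hasDerivAt_const t _
  · exact hasDerivAt_Zf c t (q.1 i₀) (q.2.1 i₀) q.2.2

lemma alpha_gmap (i₀ : Fin n) (c t : ℝ) (q : E n) :
    α₀ n (gmap i₀ c (t, q)) (pathDeriv n (gmap i₀ c) t q) = Mf c := by
  have hd := hasDerivAt_gmap i₀ c t q
  have hpd : pathDeriv n (gmap i₀ c) t q =
      ((Pi.single i₀ (Xd c t (q.1 i₀) (q.2.1 i₀)) : Fin n → ℝ),
       (Pi.single i₀ (Yd c t (q.1 i₀) (q.2.1 i₀)) : Fin n → ℝ),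
       Zd c t (q.1 i₀) (q.2.1 i₀)) := hd.deriv
  rw [α₀, hpd]
  have hsum : (∑ i, (gmap i₀ c (t, q)).1 i
        * (Pi.single i₀ (Yd c t (q.1 i₀) (q.2.1 i₀)) : Fin n → ℝ) i)
      = Xf c t (q.1 i₀) (q.2.1 i₀) * Yd c t (q.1 i₀) (q.2.1 i₀) := by
    rw [Finset.sum_eq_single i₀]
    · rw [Pi.single_eq_same]
      congr 1
      exact Function.update_self i₀ _ _
    · intro b _ hb
      rw [Pi.single_eq_of_ne hb, mul_zero]
    · intro h; exact absurd (Finset.mem_univ i₀) h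
  rw [hsum]
  exact key_identity c t _ _


lemma gmap_zero (i₀ : Fin n) (c : ℝ) (q : E n) : gmap i₀ c (0, q) = q := by
  obtain ⟨x, y, z⟩ := q
  simp only [gmap, Xf_zero, Yf_zero, Zf_zero]
  exact Prod.ext (Function.update_eq_self i₀ x)
    (Prod.ext (Function.update_eq_self i₀ y) rfl)

lemma gmap_one (i₀ : Fin n) (c : ℝ) (q : E n) : gmap i₀ c (1, q) = q := by
  obtain ⟨x, y, z⟩ := q
  simp only [gmap, Xf_one, Yf_one, Zf_one]
  exact Prod.ext (Function.update_eq_self i₀ x)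
    (Prod.ext (Function.update_eq_self i₀ y) rfl)


/-! ### Decomposition of `g_t - id` into basic maps with small coefficients -/

def mvec (i₀ : Fin n) : Fin 12 → E n → E n :=
![fun _ => ((Pi.single i₀ 1 : Fin n → ℝ), 0, 0),
  fun q => ((Pi.single i₀ (q.1 i₀) : Fin n → ℝ), 0, 0),
  fun q => ((Pi.single i₀ (q.2.1 i₀) : Fin n → ℝ), 0, 0),
  fun _ => (0, (Pi.single i₀ 1 : Fin n → ℝ), 0),
  fun q => (0, (Pi.single i₀ (q.1 i₀) : Fin n → ℝ), 0),
  fun q => (0, (Pi.single i₀ (q.2.1 i₀) : Fin n → ℝ), 0),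
  fun _ => (0, 0, (1 : ℝ)),
  fun q => (0, 0, q.1 i₀),
  fun q => (0, 0, q.2.1 i₀),
  fun q => (0, 0, (q.1 i₀) ^ 2),
  fun q => (0, 0, (q.2.1 i₀) ^ 2),
  fun q => (0, 0, q.1 i₀ * q.2.1 i₀)]

def kvec (c t : ℝ) : Fin 12 → ℝ :=
![af c t * Real.cos (tf c t),
  Real.cos (tf c t) - 1,
  -Real.sin (tf c t),
  af c t * Real.sin (tf c t),
  Real.sin (tf c t),
  Real.cos (tf c t) - 1,
  -(Real.sin (tf c t) * Real.cos (tf c t)) * af c t ^ 2 / 2 + Mf c * t - Gf c t / 2,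
  -(Real.sin (tf c t) * Real.cos (tf c t)) * af c t - Ff c t,
  Real.sin (tf c t) ^ 2 * af c t,
  -(Real.sin (tf c t) * Real.cos (tf c t) + tf c t) / 2,
  (Real.sin (tf c t) * Real.cos (tf c t) - tf c t) / 2,
  Real.sin (tf c t) ^ 2]

lemma decomp_x (c t x y : ℝ) :
    Xf c t x y - x = af c t * Real.cos (tf c t) + (Real.cos (tf c t) - 1) * x
      + (-Real.sin (tf c t)) * y := by
  simp only [Xf]; ring

lemma decomp_y (c t x y : ℝ) :
    Yf c t x y - y = af c t * Real.sin (tf c t) + Real.sin (tf c t) * x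
      + (Real.cos (tf c t) - 1) * y := by
  simp only [Yf]; ring

lemma decomp_z (c t x y z : ℝ) :
    Zf c t x y z - z =
      (-(Real.sin (tf c t) * Real.cos (tf c t)) * af c t ^ 2 / 2 + Mf c * t - Gf c t / 2)
      + (-(Real.sin (tf c t) * Real.cos (tf c t)) * af c t - Ff c t) * x
      + (Real.sin (tf c t) ^ 2 * af c t) * y
      + (-(Real.sin (tf c t) * Real.cos (tf c t) + tf c t) / 2) * x ^ 2
      + ((Real.sin (tf c t) * Real.cos (tf c t) - tf c t) / 2) * y ^ 2
      + Real.sin (tf c t) ^ 2 * (x * y) := by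
  simp only [Zf, Xf, Yf, df]
  linear_combination (-(x + af c t) * y / 2) * Real.sin_sq_add_cos_sq (tf c t)

lemma gmap_sub_id (i₀ : Fin n) (c t : ℝ) :
    (fun q : E n => gmap i₀ c (t, q) - q)
      = fun q => ∑ i, kvec c t i • mvec i₀ i q := by
  funext q
  refine Prod.ext ?_ (Prod.ext ?_ ?_)
  · funext i
    simp only [Prod.fst_sub, Pi.sub_apply, gmap, Fin.sum_univ_succ, Finset.univ_eq_empty,
      Finset.sum_empty, mvec, kvec, Matrix.cons_val_zero, Matrix.cons_val_one, Matrix.head_cons,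
      Matrix.cons_val_succ, Prod.smul_fst, Prod.fst_add, Pi.add_apply, Pi.smul_apply,
      smul_eq_mul, Prod.smul_mk, Prod.mk_add_mk, smul_zero, mul_zero, add_zero, zero_add,
      Pi.zero_apply]
    rcases eq_or_ne i i₀ with h | h
    · subst h
      rw [Function.update_self, Pi.single_eq_same, Pi.single_eq_same, Pi.single_eq_same]
      have := decomp_x c t (q.1 i) (q.2.1 i)
      linarith [this]
    · rw [Function.update_of_ne h, Pi.single_eq_of_ne h, Pi.single_eq_of_ne h,
        Pi.single_eq_of_ne h]
      ring
  · funext i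
    simp only [Prod.snd_sub, Prod.fst_sub, Pi.sub_apply, gmap, Fin.sum_univ_succ,
      Finset.univ_eq_empty, Finset.sum_empty, mvec, kvec, Matrix.cons_val_zero,
      Matrix.cons_val_one, Matrix.head_cons, Matrix.cons_val_succ, Prod.smul_fst, Prod.smul_snd,
      Prod.fst_add, Prod.snd_add, Pi.add_apply, Pi.smul_apply, smul_eq_mul, Prod.smul_mk,
      Prod.mk_add_mk, smul_zero, mul_zero, add_zero, zero_add, Pi.zero_apply]
    rcases eq_or_ne i i₀ with h | h
    · subst h
      rw [Function.update_self, Pi.single_eq_same, Pi.single_eq_same, Pi.single_eq_same]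
      have := decomp_y c t (q.1 i) (q.2.1 i)
      linarith [this]
    · rw [Function.update_of_ne h, Pi.single_eq_of_ne h, Pi.single_eq_of_ne h,
        Pi.single_eq_of_ne h]
      ring
  · simp only [Prod.snd_sub, Pi.sub_apply, gmap, Fin.sum_univ_succ, Finset.univ_eq_empty,
      Finset.sum_empty, mvec, kvec, Matrix.cons_val_zero, Matrix.cons_val_one, Matrix.head_cons,
      Matrix.cons_val_succ, Prod.smul_snd, Prod.snd_add, smul_eq_mul, Prod.smul_mk,
      Prod.mk_add_mk, smul_zero, mul_zero, add_zero, zero_add, mul_one]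
    have := decomp_z c t (q.1 i₀) (q.2.1 i₀) q.2.2
    linarith [this]


lemma contDiff_single {A : Type*} [NormedAddCommGroup A] [NormedSpace ℝ A]
    {s : A → ℝ} (i₀ : Fin n) (hs : ContDiff ℝ (⊤ : ℕ∞) s) :
    ContDiff ℝ (⊤ : ℕ∞) (fun a => (Pi.single i₀ (s a) : Fin n → ℝ)) := by
  have h : (fun a => (Pi.single i₀ (s a) : Fin n → ℝ))
      = fun a => Function.update (fun _ => (0:ℝ)) i₀ (s a) := by
    funext a j
    rcases eq_or_ne j i₀ with h | h
    · subst h; rw [Pi.single_eq_same, Function.update_self]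
    · rw [Pi.single_eq_of_ne h, Function.update_of_ne h]
  rw [h]
  exact contDiff_update i₀ contDiff_const hs

lemma contDiff_mvec (i₀ : Fin n) (i : Fin 12) : ContDiff ℝ (⊤ : ℕ∞) (mvec i₀ i) := by
  have hx : ContDiff ℝ (⊤ : ℕ∞) (fun q : E n => q.1 i₀) := by fun_prop
  have hy : ContDiff ℝ (⊤ : ℕ∞) (fun q : E n => q.2.1 i₀) := by fun_prop
  fin_cases i <;> simp only [mvec, Matrix.cons_val_zero, Matrix.cons_val_one, Matrix.head_cons,
    Matrix.cons_val_succ, Fin.mk_zero, Fin.mk_one]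
  · exact (contDiff_single i₀ contDiff_const).prodMk contDiff_const
  · exact (contDiff_single i₀ hx).prodMk contDiff_const
  · exact (contDiff_single i₀ hy).prodMk contDiff_const
  · exact contDiff_const.prodMk ((contDiff_single i₀ contDiff_const).prodMk contDiff_const)
  · exact contDiff_const.prodMk ((contDiff_single i₀ hx).prodMk contDiff_const)
  · exact contDiff_const.prodMk ((contDiff_single i₀ hy).prodMk contDiff_const)
  · exact contDiff_const
  · exact contDiff_const.prodMk (contDiff_const.prodMk hx)
  · exact contDiff_const.prodMk (contDiff_const.prodMk hy)
  · exact contDiff_const.prodMk (contDiff_const.prodMk (hx.pow 2))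
  · exact contDiff_const.prodMk (contDiff_const.prodMk (hy.pow 2))
  · exact contDiff_const.prodMk (contDiff_const.prodMk (hx.mul hy))

/-- linearity of `iteratedFDeriv` over finite sums of scaled smooth maps -/
lemma iFD_sum {ι : Type*} [DecidableEq ι] (s : Finset ι) (m : ι → E n → E n)
    (hm : ∀ i, ContDiff ℝ (⊤ : ℕ∞) (m i)) (κ : ι → ℝ) (j : ℕ) (p : E n) :
    iteratedFDeriv ℝ j (fun q => ∑ i ∈ s, κ i • m i q) p
      = ∑ i ∈ s, κ i • iteratedFDeriv ℝ j (m i) p := by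
  induction s using Finset.induction_on with
  | empty =>
      simp only [Finset.sum_empty]
      exact congrFun (iteratedFDeriv_zero_fun) p
  | insert a s' hnot ih =>
      have h1 : ContDiff ℝ (j : ℕ∞) (fun q : E n => κ a • m a q) :=
        ((hm a).const_smul (κ a)).of_le (by exact_mod_cast le_top)
      have h2 : ContDiff ℝ (j : ℕ∞) (fun q : E n => ∑ i ∈ s', κ i • m i q) := by
        apply ContDiff.sum
        intro i _
        exact ((hm i).const_smul (κ i)).of_le (by exact_mod_cast le_top)
      have hfe : (fun q : E n => ∑ i ∈ insert a s', κ i • m i q)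
          = (fun q => κ a • m a q) + (fun q => ∑ i ∈ s', κ i • m i q) := by
        funext q
        rw [Finset.sum_insert hnot]
        rfl
      rw [hfe, iteratedFDeriv_add_apply h1.contDiffAt h2.contDiffAt, Finset.sum_insert hnot, ih]
      congr 1
      rw [show (fun q : E n => κ a • m a q) = κ a • m a from rfl,
        iteratedFDeriv_const_smul_apply ((hm a).of_le (by exact_mod_cast le_top)).contDiffAt]

/-! ### Coefficient bounds -/

lemma abs_cos_sub_one_le (x : ℝ) : |Real.cos x - 1| ≤ x ^ 2 / 2 := by
  have h1 : Real.sin (x / 2) ^ 2 = 1 / 2 - Real.cos x / 2 := by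
    have := Real.sin_sq_eq_half_sub (x / 2)
    rwa [show 2 * (x / 2) = x by ring] at this
  have h2 : |Real.sin (x / 2)| ≤ |x / 2| := Real.abs_sin_le_abs
  have h3 : Real.sin (x / 2) ^ 2 ≤ (x / 2) ^ 2 := by
    have := sq_abs (Real.sin (x / 2))
    have := sq_abs (x / 2)
    nlinarith [abs_nonneg (Real.sin (x / 2)), abs_nonneg (x / 2)]
  rw [abs_le]
  constructor
  · nlinarith
  · nlinarith [sq_nonneg (Real.sin (x / 2))]

set_option maxHeartbeats 1000000 in
lemma kvec_bound {c t : ℝ} (hc : 0 < c) (hc1 : c ≤ 1) (ht0 : 0 ≤ t) (ht1 : t ≤ 1)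
    (i : Fin 12) : |kvec c t i| ≤ 8 * c := by
  have hpi4 : Real.pi ≤ 4 := Real.pi_le_four
  have hpi0 : 0 < Real.pi := Real.pi_pos
  have hcsq : c ^ 2 ≤ c := by nlinarith
  have hcc : c * c ≤ c := by nlinarith
  have habs1 : |Real.sin (om * t)| ≤ 1 := Real.abs_sin_le_one _
  have habs2 : |Real.sin (2 * (om * t))| ≤ 1 := Real.abs_sin_le_one _
  have htf : |tf c t| ≤ c := by
    rw [tf, abs_mul, abs_of_pos hc]
    nlinarith
  have hsin : |Real.sin (tf c t)| ≤ c := (Real.abs_sin_le_abs).trans htf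
  have hsin1 : |Real.sin (tf c t)| ≤ 1 := Real.abs_sin_le_one _
  have hcos1 : |Real.cos (tf c t)| ≤ 1 := Real.abs_cos_le_one _
  have hcossub : |Real.cos (tf c t) - 1| ≤ c := by
    refine (abs_cos_sub_one_le (tf c t)).trans ?_
    have h1 : tf c t ^ 2 ≤ c ^ 2 := by
      have h2 := sq_abs (tf c t)
      nlinarith [abs_nonneg (tf c t)]
    nlinarith
  have haf : |af c t| ≤ 2 * c := by
    rw [af, abs_mul, abs_of_pos hc]
    have h := abs_add_le (Real.sin (om * t)) (Real.sin (2 * (om * t)))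
    nlinarith
  have hsc : |Real.sin (tf c t) * Real.cos (tf c t)| ≤ c := by
    rw [abs_mul]
    calc |Real.sin (tf c t)| * |Real.cos (tf c t)| ≤ c * 1 :=
          mul_le_mul hsin hcos1 (abs_nonneg _) hc.le
      _ = c := mul_one c
  have hFf : |Ff c t| ≤ 2 * c := by
    rw [Ff, abs_mul, abs_of_pos (pow_pos hc 2)]
    have hs2 : |Real.sin (om * t) ^ 2| ≤ 1 := by
      rw [abs_pow]
      exact pow_le_one₀ (abs_nonneg _) habs1
    have hc3 : |Real.cos (om * t) ^ 3| ≤ 1 := by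
      rw [abs_pow]
      exact pow_le_one₀ (abs_nonneg _) (Real.abs_cos_le_one _)
    have hs2' := abs_le.1 hs2
    have hc3' := abs_le.1 hc3
    have hb : |Real.sin (om * t) ^ 2 / 2 + 2 / 3 * (1 - Real.cos (om * t) ^ 3)| ≤ 2 := by
      rw [abs_le]
      constructor
      · linarith [hs2'.1, hc3'.2]
      · linarith [hs2'.2, hc3'.1]
    calc c ^ 2 * |Real.sin (om * t) ^ 2 / 2 + 2 / 3 * (1 - Real.cos (om * t) ^ 3)|
        ≤ c ^ 2 * 2 := by nlinarith [pow_pos hc 2]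
      _ ≤ 2 * c := by nlinarith
  have hGf : |Gf c t| ≤ 7 * c := by
    rw [Gf, abs_mul, abs_of_pos (pow_pos hc 3)]
    have hs3 : |Real.sin (om * t) ^ 3| ≤ 1 := by
      rw [abs_pow]; exact pow_le_one₀ (abs_nonneg _) habs1
    have hs5 : |Real.sin (om * t) ^ 5| ≤ 1 := by
      rw [abs_pow]; exact pow_le_one₀ (abs_nonneg _) habs1
    have hs4 := abs_le.1 (Real.abs_sin_le_one (4 * (om * t)))
    have hs3' := abs_le.1 hs3
    have hs5' := abs_le.1 hs5
    have homt0 : 0 ≤ om * t := by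
      have := om_pos; nlinarith
    have homt1 : om * t ≤ 2 * Real.pi := by
      rw [om]; nlinarith
    have hb : |5 / 3 * Real.sin (om * t) ^ 3 - 4 / 5 * Real.sin (om * t) ^ 5 + om * t / 2
        - Real.sin (4 * (om * t)) / 8| ≤ 7 := by
      rw [abs_le]
      constructor
      · linarith [hs3'.1, hs5'.2, hs4.2]
      · linarith [hs3'.2, hs5'.1, hs4.1]
    have hc3 : c ^ 3 ≤ c := by nlinarith
    calc c ^ 3 * |5 / 3 * Real.sin (om * t) ^ 3 - 4 / 5 * Real.sin (om * t) ^ 5 + om * t / 2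
          - Real.sin (4 * (om * t)) / 8| ≤ c ^ 3 * 7 := by nlinarith [pow_pos hc 3]
      _ ≤ 7 * c := by nlinarith
  have hMf : |Mf c * t| ≤ 2 * c := by
    rw [Mf, abs_mul, abs_of_nonneg ht0, abs_div, abs_mul,
      abs_of_pos hpi0, abs_of_pos (pow_pos hc 3), abs_two]
    have hc3 : c ^ 3 ≤ c := by nlinarith
    have h1 : Real.pi * c ^ 3 / 2 ≤ 2 * c := by nlinarith [pow_pos hc 3]
    have h2 : Real.pi * c ^ 3 / 2 * t ≤ Real.pi * c ^ 3 / 2 * 1 := by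
      have : 0 ≤ Real.pi * c ^ 3 / 2 := by positivity
      nlinarith
    nlinarith [pow_pos hc 3]
  have haf2 : |af c t ^ 2| ≤ 4 * c := by
    rw [abs_pow]
    have h1 : |af c t| ^ 2 ≤ (2 * c) ^ 2 := by
      exact pow_le_pow_left₀ (abs_nonneg _) haf 2
    nlinarith
  have hsq : |Real.sin (tf c t) ^ 2| ≤ c := by
    rw [abs_pow, sq]
    calc |Real.sin (tf c t)| * |Real.sin (tf c t)| ≤ c * 1 :=
          mul_le_mul hsin hsin1 (abs_nonneg _) hc.le
      _ = c := mul_one c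
  fin_cases i
  · show |af c t * Real.cos (tf c t)| ≤ 8 * c
    rw [abs_mul]
    calc |af c t| * |Real.cos (tf c t)| ≤ (2 * c) * 1 :=
          mul_le_mul haf hcos1 (abs_nonneg _) (by linarith)
      _ ≤ 8 * c := by linarith
  · show |Real.cos (tf c t) - 1| ≤ 8 * c
    linarith
  · show |(-Real.sin (tf c t))| ≤ 8 * c
    rw [abs_neg]; linarith
  · show |af c t * Real.sin (tf c t)| ≤ 8 * c
    rw [abs_mul]
    calc |af c t| * |Real.sin (tf c t)| ≤ (2 * c) * 1 :=
          mul_le_mul haf hsin1 (abs_nonneg _) (by linarith)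
      _ ≤ 8 * c := by linarith
  · show |Real.sin (tf c t)| ≤ 8 * c
    linarith
  · show |Real.cos (tf c t) - 1| ≤ 8 * c
    linarith
  · show |(-(Real.sin (tf c t) * Real.cos (tf c t)) * af c t ^ 2 / 2 + Mf c * t - Gf c t / 2)|
      ≤ 8 * c
    have hA : |(-(Real.sin (tf c t) * Real.cos (tf c t)) * af c t ^ 2 / 2)| ≤ 2 * c := by
      rw [abs_div, abs_mul, abs_neg, abs_two]
      have h1 : |Real.sin (tf c t) * Real.cos (tf c t)| * |af c t ^ 2| ≤ c * (4 * c) :=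
        mul_le_mul hsc haf2 (abs_nonneg _) hc.le
      nlinarith
    have hG2 : |Gf c t / 2| ≤ 7 * c / 2 := by
      rw [abs_div, abs_two]; linarith
    calc |(-(Real.sin (tf c t) * Real.cos (tf c t)) * af c t ^ 2 / 2 + Mf c * t - Gf c t / 2)|
        = |(-(Real.sin (tf c t) * Real.cos (tf c t)) * af c t ^ 2 / 2 + Mf c * t)
            + -(Gf c t / 2)| := by ring_nf
      _ ≤ |(-(Real.sin (tf c t) * Real.cos (tf c t)) * af c t ^ 2 / 2 + Mf c * t)|
            + |(-(Gf c t / 2))| := abs_add_le _ _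
      _ ≤ (|(-(Real.sin (tf c t) * Real.cos (tf c t)) * af c t ^ 2 / 2)| + |Mf c * t|)
            + |Gf c t / 2| := by
          rw [abs_neg]
          exact add_le_add (abs_add_le _ _) le_rfl
      _ ≤ (2 * c + 2 * c) + 7 * c / 2 := by linarith
      _ ≤ 8 * c := by linarith
  · show |(-(Real.sin (tf c t) * Real.cos (tf c t)) * af c t - Ff c t)| ≤ 8 * c
    have hA : |(-(Real.sin (tf c t) * Real.cos (tf c t)) * af c t)| ≤ 2 * c := by
      rw [abs_mul, abs_neg]
      have h1 : |Real.sin (tf c t) * Real.cos (tf c t)| * |af c t| ≤ c * (2 * c) :=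
        mul_le_mul hsc haf (abs_nonneg _) hc.le
      nlinarith
    calc |(-(Real.sin (tf c t) * Real.cos (tf c t)) * af c t - Ff c t)|
        = |(-(Real.sin (tf c t) * Real.cos (tf c t)) * af c t) + -(Ff c t)| := by ring_nf
      _ ≤ |(-(Real.sin (tf c t) * Real.cos (tf c t)) * af c t)| + |(-(Ff c t))| := abs_add_le _ _
      _ ≤ 2 * c + 2 * c := by rw [abs_neg]; linarith
      _ ≤ 8 * c := by linarith
  · show |Real.sin (tf c t) ^ 2 * af c t| ≤ 8 * c
    rw [abs_mul]
    calc |Real.sin (tf c t) ^ 2| * |af c t| ≤ 1 * (2 * c) := by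
          have h1 : |Real.sin (tf c t) ^ 2| ≤ 1 := by
            rw [abs_pow]; exact pow_le_one₀ (abs_nonneg _) hsin1
          exact mul_le_mul h1 haf (abs_nonneg _) one_pos.le
      _ ≤ 8 * c := by linarith
  · show |(-(Real.sin (tf c t) * Real.cos (tf c t) + tf c t) / 2)| ≤ 8 * c
    rw [abs_div, abs_neg, abs_two]
    have h1 : |Real.sin (tf c t) * Real.cos (tf c t) + tf c t| ≤ 2 * c := by
      calc |Real.sin (tf c t) * Real.cos (tf c t) + tf c t|
          ≤ |Real.sin (tf c t) * Real.cos (tf c t)| + |tf c t| := abs_add_le _ _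
        _ ≤ 2 * c := by linarith
    linarith
  · show |((Real.sin (tf c t) * Real.cos (tf c t) - tf c t) / 2)| ≤ 8 * c
    rw [abs_div, abs_two]
    have h1 : |Real.sin (tf c t) * Real.cos (tf c t) - tf c t| ≤ 2 * c := by
      calc |Real.sin (tf c t) * Real.cos (tf c t) - tf c t|
          = |Real.sin (tf c t) * Real.cos (tf c t) + -(tf c t)| := by ring_nf
        _ ≤ |Real.sin (tf c t) * Real.cos (tf c t)| + |(-(tf c t))| := abs_add_le _ _
        _ ≤ 2 * c := by rw [abs_neg]; linarith
    linarith
  · show |Real.sin (tf c t) ^ 2| ≤ 8 * c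
    linarith


end SL

/-- There exist `C^∞`-small positive loops of diffeomorphisms of `ℝ^{2n+1}`:
for every `ε > 0`, `k ∈ ℕ` and compact set `C` there is a positive loop based at the identity
which on `C` is `ε`-close to the identity in all derivatives up to order `k`. -/
theorem exists_small_positive_loop (n : ℕ) (hn : 1 ≤ n)
    (ε : ℝ) (hε : 0 < ε) (k : ℕ) (C : Set (E n)) (hC : IsCompact C) :
    ∃ g : ℝ × E n → E n, IsSmoothPath n g ∧ IsPositivePath n g ∧
      (∀ p, g (0, p) = p) ∧ (∀ p, g (1, p) = p) ∧
      ∀ t ∈ Icc (0:ℝ) 1, ∀ j ≤ k, ∀ p ∈ C,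
        ‖iteratedFDeriv ℝ j (fun q => g (t, q) - q) p‖ < ε := by
  have hn0 : 0 < n := hn
  set i₀ : Fin n := ⟨0, hn0⟩ with hi₀
  have hΦc : Continuous (fun p : E n => ∑ j ∈ Finset.range (k + 1), ∑ i : Fin 12,
      ‖iteratedFDeriv ℝ j (SL.mvec i₀ i) p‖) := by
    apply continuous_finset_sum
    intro j _
    apply continuous_finset_sum
    intro i _
    exact ((SL.contDiff_mvec i₀ i).continuous_iteratedFDeriv (by exact_mod_cast le_top)).norm
  obtain ⟨B, hB⟩ := hC.exists_bound_of_continuousOn hΦc.continuousOn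
  set B' : ℝ := max B 0 with hB'def
  have hB'0 : 0 ≤ B' := le_max_right _ _
  set c : ℝ := min 1 (ε / (96 * (B' + 1))) with hcdef
  have hc : 0 < c := lt_min one_pos (by positivity)
  have hc1 : c ≤ 1 := min_le_left _ _
  have hcle : c ≤ ε / (96 * (B' + 1)) := min_le_right _ _
  refine ⟨SL.gmap i₀ c, ⟨SL.contDiff_gmap i₀ c, ?_⟩, ?_, ?_, ?_, ?_⟩
  · intro t _
    exact ⟨SL.contDiff_gmap_slice i₀ c t, SL.ginv i₀ c t, SL.contDiff_ginv i₀ c t,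
      SL.gmap_left_inv i₀ c t, SL.gmap_right_inv i₀ c t⟩
  · intro t _ q
    rw [SL.alpha_gmap i₀ c t q, SL.Mf]
    have := Real.pi_pos
    nlinarith [pow_pos hc 3]
  · exact SL.gmap_zero i₀ c
  · exact SL.gmap_one i₀ c
  · intro t ht j hj p hp
    rw [SL.gmap_sub_id i₀ c t,
      SL.iFD_sum Finset.univ (SL.mvec i₀) (SL.contDiff_mvec i₀) (SL.kvec c t) j p]
    have hkb : ∀ i : Fin 12, |SL.kvec c t i| ≤ 8 * c :=
      fun i => SL.kvec_bound hc hc1 ht.1 ht.2 i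
    have hΦ0 : (0:ℝ) ≤ ∑ i : Fin 12, ‖iteratedFDeriv ℝ j (SL.mvec i₀ i) p‖ :=
      Finset.sum_nonneg fun i _ => norm_nonneg _
    have hstep : ‖∑ i : Fin 12, SL.kvec c t i • iteratedFDeriv ℝ j (SL.mvec i₀ i) p‖
        ≤ 8 * c * ∑ i : Fin 12, ‖iteratedFDeriv ℝ j (SL.mvec i₀ i) p‖ := by
      calc ‖∑ i : Fin 12, SL.kvec c t i • iteratedFDeriv ℝ j (SL.mvec i₀ i) p‖
          ≤ ∑ i : Fin 12, ‖SL.kvec c t i • iteratedFDeriv ℝ j (SL.mvec i₀ i) p‖ :=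
            norm_sum_le _ _
        _ = ∑ i : Fin 12, |SL.kvec c t i| * ‖iteratedFDeriv ℝ j (SL.mvec i₀ i) p‖ :=
            Finset.sum_congr rfl fun i _ => by
              rw [show |SL.kvec c t i| = ‖SL.kvec c t i‖ from (Real.norm_eq_abs _).symm]
              exact norm_smul (SL.kvec c t i) (iteratedFDeriv ℝ j (SL.mvec i₀ i) p)
        _ ≤ ∑ i : Fin 12, 8 * c * ‖iteratedFDeriv ℝ j (SL.mvec i₀ i) p‖ :=
            Finset.sum_le_sum fun i _ =>
              mul_le_mul_of_nonneg_right (hkb i) (norm_nonneg _)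
        _ = 8 * c * ∑ i : Fin 12, ‖iteratedFDeriv ℝ j (SL.mvec i₀ i) p‖ := by
            rw [Finset.mul_sum]
    have hsumle : (∑ i : Fin 12, ‖iteratedFDeriv ℝ j (SL.mvec i₀ i) p‖) ≤ B' := by
      have h1 : (∑ i : Fin 12, ‖iteratedFDeriv ℝ j (SL.mvec i₀ i) p‖)
          ≤ ∑ j' ∈ Finset.range (k + 1), ∑ i : Fin 12,
              ‖iteratedFDeriv ℝ j' (SL.mvec i₀ i) p‖ :=
        Finset.single_le_sum
          (f := fun j' => ∑ i : Fin 12, ‖iteratedFDeriv ℝ j' (SL.mvec i₀ i) p‖)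
          (fun j' _ => Finset.sum_nonneg fun i _ => norm_nonneg _)
          (Finset.mem_range.2 (Nat.lt_succ_of_le hj))
      have h2 := hB p hp
      rw [Real.norm_eq_abs] at h2
      have h3 := le_abs_self (∑ j' ∈ Finset.range (k + 1), ∑ i : Fin 12,
        ‖iteratedFDeriv ℝ j' (SL.mvec i₀ i) p‖)
      have h4 : B ≤ B' := le_max_left _ _
      linarith
    have hD : (0:ℝ) < 96 * (B' + 1) := by positivity
    have hu : (0:ℝ) < ε / (96 * (B' + 1)) := by positivity
    have hfinal : 8 * c * (∑ i : Fin 12, ‖iteratedFDeriv ℝ j (SL.mvec i₀ i) p‖) < ε := by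
      have hDu : (96 * (B' + 1)) * (ε / (96 * (B' + 1))) = ε :=
        mul_div_cancel₀ _ (ne_of_gt hD)
      nlinarith [mul_pos hu (show (0:ℝ) < 88 * B' + 96 by linarith),
        mul_le_mul_of_nonneg_right hcle hB'0,
        mul_le_mul_of_nonneg_left hsumle (show (0:ℝ) ≤ 8 * c by positivity),
        mul_le_mul_of_nonneg_left hcle (show (0:ℝ) ≤ 8 * B' by linarith)]
    exact lt_of_le_of_lt hstep hfinal
end
end

section
/- Let n ≥ 1. There exists a smooth map H : [0,1] × [0,1] × ℝ^{2n+1} → ℝ^{2n+1} such that (i) for every s ∈ [0,1] and t ∈ [0,1] the map H(t,s,·) is a diffeomorphism of ℝ^{2n+1}, (ii) H(0,s,·) = H(1,s,·) = id for all s (each t-slice is a loop based at the identity), (iii) H(t,1,p) = p for all t and p (the loop at s = 1 is the constant loop at the identity), and (iv) for every s ∈ [0,1), the loop t ↦ H(t,s,·) is positive, i.e. α₀(H(t,s,q))(∂_t H(t,s,q)) > 0 for all t ∈ [0,1] and q ∈ ℝ^{2n+1}. In other words, there is a positive loop of diffeomorphisms that is contracted to the constant loop through positive loops. -/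
open Set Function

noncomputable section

open Real in
/-- x-offset: `(1-s)(cos(2πt) - 1)`. -/
def PLC_A (t s : ℝ) : ℝ := (1 - s) * (Real.cos (2 * π * t) - 1)

open Real in
/-- y-offset: `(1-s) sin(2πt)`. -/
def PLC_B (t s : ℝ) : ℝ := (1 - s) * Real.sin (2 * π * t)

open Real in
/-- z-offset (depends on the first x-coordinate `x1`). -/
def PLC_C (t s x1 : ℝ) : ℝ :=
  (-((1 - s) * x1) + (1 - s) ^ 2) * Real.sin (2 * π * t)
    - (1 - s) ^ 2 / 4 * Real.sin (2 * (2 * π * t))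

def PLC_e (n : ℕ) (i₀ : Fin n) : Fin n → ℝ := fun j => if j = i₀ then 1 else 0

/-- The homotopy of loops. -/
def PLC_F (n : ℕ) (i₀ : Fin n) (t s : ℝ) (p : E n) : E n :=
  (fun j => p.1 j + PLC_A t s * PLC_e n i₀ j,
   fun j => p.2.1 j + PLC_B t s * PLC_e n i₀ j,
   p.2.2 + PLC_C t s (p.1 i₀))

/-- The inverse of each slice. -/
def PLC_G (n : ℕ) (i₀ : Fin n) (t s : ℝ) (p : E n) : E n :=
  (fun j => p.1 j - PLC_A t s * PLC_e n i₀ j,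
   fun j => p.2.1 j - PLC_B t s * PLC_e n i₀ j,
   p.2.2 - PLC_C t s (p.1 i₀ - PLC_A t s))

open Real

@[simp] lemma PLC_e_self (n : ℕ) (i₀ : Fin n) : PLC_e n i₀ i₀ = 1 := if_pos rfl

lemma PLC_e_ne (n : ℕ) (i₀ j : Fin n) (h : j ≠ i₀) : PLC_e n i₀ j = 0 := if_neg h

lemma PLC_hasDerivAt_lin (t : ℝ) : HasDerivAt (fun t' : ℝ => 2 * π * t') (2 * π) t := by
  simpa using (hasDerivAt_id t).const_mul (2 * π)

lemma PLC_hasDerivAt_lin2 (t : ℝ) :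
    HasDerivAt (fun t' : ℝ => 2 * (2 * π * t')) (2 * (2 * π)) t :=
  (PLC_hasDerivAt_lin t).const_mul 2

lemma PLC_hasDerivAt_sin2pi (t : ℝ) :
    HasDerivAt (fun t' : ℝ => Real.sin (2 * π * t')) (Real.cos (2 * π * t) * (2 * π)) t :=
  (Real.hasDerivAt_sin (2 * π * t)).comp t (PLC_hasDerivAt_lin t)

lemma PLC_hasDerivAt_cos2pi (t : ℝ) :
    HasDerivAt (fun t' : ℝ => Real.cos (2 * π * t')) (-Real.sin (2 * π * t) * (2 * π)) t :=
  (Real.hasDerivAt_cos (2 * π * t)).comp t (PLC_hasDerivAt_lin t)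

lemma PLC_hasDerivAt_sin4pi (t : ℝ) :
    HasDerivAt (fun t' : ℝ => Real.sin (2 * (2 * π * t')))
      (Real.cos (2 * (2 * π * t)) * (2 * (2 * π))) t :=
  (PLC_hasDerivAt_lin2 t).sin

lemma PLC_hasDerivAt_A (t s : ℝ) :
    HasDerivAt (fun t' => PLC_A t' s) ((1 - s) * (-Real.sin (2 * π * t) * (2 * π))) t := by
  simpa [PLC_A] using ((PLC_hasDerivAt_cos2pi t).sub_const 1).const_mul (1 - s)

lemma PLC_hasDerivAt_B (t s : ℝ) :
    HasDerivAt (fun t' => PLC_B t' s) ((1 - s) * (Real.cos (2 * π * t) * (2 * π))) t := by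
  simpa [PLC_B] using (PLC_hasDerivAt_sin2pi t).const_mul (1 - s)

lemma PLC_hasDerivAt_C (t s x1 : ℝ) :
    HasDerivAt (fun t' => PLC_C t' s x1)
      ((-((1 - s) * x1) + (1 - s) ^ 2) * (Real.cos (2 * π * t) * (2 * π))
        - (1 - s) ^ 2 / 4 * (Real.cos (2 * (2 * π * t)) * (2 * (2 * π)))) t := by
  unfold PLC_C; exact
    ((PLC_hasDerivAt_sin2pi t).const_mul (-((1 - s) * x1) + (1 - s) ^ 2)).sub
      ((PLC_hasDerivAt_sin4pi t).const_mul ((1 - s) ^ 2 / 4))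

lemma PLC_contDiff_sin2pi : ContDiff ℝ (⊤ : ℕ∞) (fun t : ℝ => Real.sin (2 * π * t)) :=
  Real.contDiff_sin.comp (contDiff_const.mul contDiff_id)

lemma PLC_contDiff_cos2pi : ContDiff ℝ (⊤ : ℕ∞) (fun t : ℝ => Real.cos (2 * π * t)) :=
  Real.contDiff_cos.comp (contDiff_const.mul contDiff_id)

lemma PLC_contDiff_sin4pi : ContDiff ℝ (⊤ : ℕ∞) (fun t : ℝ => Real.sin (2 * (2 * π * t))) :=
  Real.contDiff_sin.comp (contDiff_const.mul (contDiff_const.mul contDiff_id))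

/-- Smoothness of the full homotopy. -/
lemma PLC_contDiff_H (n : ℕ) (i₀ : Fin n) :
    ContDiff ℝ (⊤ : ℕ∞) (fun w : ℝ × ℝ × E n => PLC_F n i₀ w.1 w.2.1 w.2.2) := by
  have hs' : ContDiff ℝ (⊤ : ℕ∞) (fun w : ℝ × ℝ × E n => (1 : ℝ) - w.2.1) :=
    contDiff_const.sub (contDiff_fst.comp contDiff_snd)
  have hA : ContDiff ℝ (⊤ : ℕ∞) (fun w : ℝ × ℝ × E n => PLC_A w.1 w.2.1) :=
    hs'.mul ((PLC_contDiff_cos2pi.comp contDiff_fst).sub contDiff_const)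
  have hB : ContDiff ℝ (⊤ : ℕ∞) (fun w : ℝ × ℝ × E n => PLC_B w.1 w.2.1) :=
    hs'.mul (PLC_contDiff_sin2pi.comp contDiff_fst)
  have hx1 : ContDiff ℝ (⊤ : ℕ∞) (fun w : ℝ × ℝ × E n => w.2.2.1 i₀) :=
    (contDiff_pi.mp contDiff_id i₀).comp
      (contDiff_fst.comp (contDiff_snd.comp contDiff_snd))
  have hC : ContDiff ℝ (⊤ : ℕ∞) (fun w : ℝ × ℝ × E n => PLC_C w.1 w.2.1 (w.2.2.1 i₀)) := by
    unfold PLC_C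
    exact (((hs'.mul hx1).neg.add (hs'.pow 2)).mul
        (PLC_contDiff_sin2pi.comp contDiff_fst)).sub
      (((hs'.pow 2).div_const 4).mul (PLC_contDiff_sin4pi.comp contDiff_fst))
  unfold PLC_F
  refine ContDiff.prodMk ?_ (ContDiff.prodMk ?_ ?_)
  · exact contDiff_pi.mpr fun j =>
      (((contDiff_pi.mp contDiff_id j).comp
        (contDiff_fst.comp (contDiff_snd.comp contDiff_snd)))).add (hA.mul contDiff_const)
  · exact contDiff_pi.mpr fun j =>
      (((contDiff_pi.mp contDiff_id j).comp
        ((contDiff_fst.comp contDiff_snd).comp (contDiff_snd.comp contDiff_snd)))).add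
        (hB.mul contDiff_const)
  · exact ((contDiff_snd.comp contDiff_snd).comp (contDiff_snd.comp contDiff_snd)).add hC

/-- Smoothness of each slice and its inverse. -/
lemma PLC_contDiff_F (n : ℕ) (i₀ : Fin n) (t s : ℝ) :
    ContDiff ℝ (⊤ : ℕ∞) (PLC_F n i₀ t s) := by
  have hx1 : ContDiff ℝ (⊤ : ℕ∞) (fun p : E n => p.1 i₀) :=
    (contDiff_pi.mp contDiff_id i₀).comp contDiff_fst
  have hC : ContDiff ℝ (⊤ : ℕ∞) (fun p : E n => PLC_C t s (p.1 i₀)) := by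
    unfold PLC_C
    exact (((contDiff_const.mul hx1).neg.add contDiff_const).mul contDiff_const).sub
      contDiff_const
  unfold PLC_F
  refine ContDiff.prodMk ?_ (ContDiff.prodMk ?_ ?_)
  · exact contDiff_pi.mpr fun j =>
      ((contDiff_pi.mp contDiff_id j).comp contDiff_fst).add contDiff_const
  · exact contDiff_pi.mpr fun j =>
      ((contDiff_pi.mp contDiff_id j).comp (contDiff_fst.comp contDiff_snd)).add contDiff_const
  · exact (contDiff_snd.comp contDiff_snd).add hC

lemma PLC_contDiff_G (n : ℕ) (i₀ : Fin n) (t s : ℝ) :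
    ContDiff ℝ (⊤ : ℕ∞) (PLC_G n i₀ t s) := by
  have hx1 : ContDiff ℝ (⊤ : ℕ∞) (fun p : E n => p.1 i₀ - PLC_A t s) :=
    ((contDiff_pi.mp contDiff_id i₀).comp contDiff_fst).sub contDiff_const
  have hC : ContDiff ℝ (⊤ : ℕ∞) (fun p : E n => PLC_C t s (p.1 i₀ - PLC_A t s)) := by
    unfold PLC_C
    exact (((contDiff_const.mul hx1).neg.add contDiff_const).mul contDiff_const).sub
      contDiff_const
  unfold PLC_G
  refine ContDiff.prodMk ?_ (ContDiff.prodMk ?_ ?_)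
  · exact contDiff_pi.mpr fun j =>
      ((contDiff_pi.mp contDiff_id j).comp contDiff_fst).sub contDiff_const
  · exact contDiff_pi.mpr fun j =>
      ((contDiff_pi.mp contDiff_id j).comp (contDiff_fst.comp contDiff_snd)).sub contDiff_const
  · exact (contDiff_snd.comp contDiff_snd).sub hC

lemma PLC_left_inv (n : ℕ) (i₀ : Fin n) (t s : ℝ) (p : E n) :
    PLC_G n i₀ t s (PLC_F n i₀ t s p) = p := by
  unfold PLC_F PLC_G
  refine Prod.ext ?_ (Prod.ext ?_ ?_)
  · funext j; show p.1 j + PLC_A t s * PLC_e n i₀ j - PLC_A t s * PLC_e n i₀ j = p.1 j; ring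
  · funext j; show p.2.1 j + PLC_B t s * PLC_e n i₀ j - PLC_B t s * PLC_e n i₀ j = p.2.1 j; ring
  · show p.2.2 + PLC_C t s (p.1 i₀)
        - PLC_C t s (p.1 i₀ + PLC_A t s * PLC_e n i₀ i₀ - PLC_A t s) = p.2.2
    simp

lemma PLC_right_inv (n : ℕ) (i₀ : Fin n) (t s : ℝ) (p : E n) :
    PLC_F n i₀ t s (PLC_G n i₀ t s p) = p := by
  unfold PLC_F PLC_G
  refine Prod.ext ?_ (Prod.ext ?_ ?_)
  · funext j; show p.1 j - PLC_A t s * PLC_e n i₀ j + PLC_A t s * PLC_e n i₀ j = p.1 j; ring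
  · funext j; show p.2.1 j - PLC_B t s * PLC_e n i₀ j + PLC_B t s * PLC_e n i₀ j = p.2.1 j; ring
  · show p.2.2 - PLC_C t s (p.1 i₀ - PLC_A t s)
        + PLC_C t s (p.1 i₀ - PLC_A t s * PLC_e n i₀ i₀) = p.2.2
    simp

lemma PLC_isDiffeo (n : ℕ) (i₀ : Fin n) (t s : ℝ) : IsDiffeo n (PLC_F n i₀ t s) :=
  ⟨PLC_contDiff_F n i₀ t s, PLC_G n i₀ t s, PLC_contDiff_G n i₀ t s,
    PLC_left_inv n i₀ t s, PLC_right_inv n i₀ t s⟩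

lemma PLC_F_zero (n : ℕ) (i₀ : Fin n) (s : ℝ) (p : E n) : PLC_F n i₀ 0 s p = p := by
  unfold PLC_F
  refine Prod.ext ?_ (Prod.ext ?_ ?_) <;>
    first
    | (funext j; simp [PLC_A, PLC_B])
    | simp [PLC_C]

lemma PLC_F_one (n : ℕ) (i₀ : Fin n) (s : ℝ) (p : E n) : PLC_F n i₀ 1 s p = p := by
  unfold PLC_F
  refine Prod.ext ?_ (Prod.ext ?_ ?_) <;>
    first
    | (funext j; simp [PLC_A, PLC_B, Real.sin_two_mul, Real.cos_two_pi, Real.sin_two_pi])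
    | simp [PLC_C, Real.sin_two_mul, Real.cos_two_pi, Real.sin_two_pi]

lemma PLC_F_s_one (n : ℕ) (i₀ : Fin n) (t : ℝ) (p : E n) : PLC_F n i₀ t 1 p = p := by
  unfold PLC_F
  refine Prod.ext ?_ (Prod.ext ?_ ?_) <;>
    first
    | (funext j; simp [PLC_A, PLC_B])
    | simp [PLC_C]

lemma PLC_hasDerivAt_F (n : ℕ) (i₀ : Fin n) (t s : ℝ) (q : E n) :
    HasDerivAt (fun t' => PLC_F n i₀ t' s q)
      ((fun j => (1 - s) * (-Real.sin (2 * π * t) * (2 * π)) * PLC_e n i₀ j,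
        fun j => (1 - s) * (Real.cos (2 * π * t) * (2 * π)) * PLC_e n i₀ j,
        (-((1 - s) * q.1 i₀) + (1 - s) ^ 2) * (Real.cos (2 * π * t) * (2 * π))
          - (1 - s) ^ 2 / 4 * (Real.cos (2 * (2 * π * t)) * (2 * (2 * π)))) : E n) t := by
  refine HasDerivAt.prodMk ?_ (HasDerivAt.prodMk ?_ ?_)
  · exact hasDerivAt_pi.mpr fun j =>
      ((PLC_hasDerivAt_A t s).mul_const (PLC_e n i₀ j)).const_add (q.1 j)
  · exact hasDerivAt_pi.mpr fun j =>
      ((PLC_hasDerivAt_B t s).mul_const (PLC_e n i₀ j)).const_add (q.2.1 j)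
  · exact (PLC_hasDerivAt_C t s (q.1 i₀)).const_add q.2.2

lemma PLC_positivity (n : ℕ) (i₀ : Fin n) (t s : ℝ) (hs : s < 1) (q : E n) :
    0 < α₀ n (PLC_F n i₀ t s q) (deriv (fun t' => PLC_F n i₀ t' s q) t) := by
  have h1s : (0:ℝ) < 1 - s := by linarith
  rw [(PLC_hasDerivAt_F n i₀ t s q).deriv]
  simp only [α₀, PLC_F]
  have hsum : (∑ j, (q.1 j + PLC_A t s * PLC_e n i₀ j)
        * ((1 - s) * (Real.cos (2 * π * t) * (2 * π)) * PLC_e n i₀ j))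
      = (q.1 i₀ + PLC_A t s) * ((1 - s) * (Real.cos (2 * π * t) * (2 * π))) := by
    rw [Finset.sum_eq_single i₀]
    · simp
    · intro j _ hj; simp [PLC_e_ne n i₀ j hj]
    · intro h; exact absurd (Finset.mem_univ i₀) h
  rw [hsum]
  have key : (-((1 - s) * q.1 i₀) + (1 - s) ^ 2) * (Real.cos (2 * π * t) * (2 * π))
        - (1 - s) ^ 2 / 4 * (Real.cos (2 * (2 * π * t)) * (2 * (2 * π)))
      + (q.1 i₀ + PLC_A t s) * ((1 - s) * (Real.cos (2 * π * t) * (2 * π)))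
      = π * (1 - s) ^ 2 := by
    rw [Real.cos_two_mul (2 * π * t)]
    simp only [PLC_A]
    ring
  rw [key]
  have := Real.pi_pos
  positivity

/-- There is a positive loop of diffeomorphisms of `ℝ^{2n+1}` that is
contracted to the constant loop at the identity through positive loops: a smooth homotopy
`H(t,s,·)` of loops based at the identity, equal to the constant loop for `s = 1` and positive
for every `s ∈ [0,1)`. -/
theorem positive_loop_contraction (n : ℕ) (hn : 1 ≤ n) :
    ∃ H : ℝ × ℝ × E n → E n, ContDiff ℝ (⊤ : ℕ∞) H ∧
      (∀ t ∈ Icc (0:ℝ) 1, ∀ s ∈ Icc (0:ℝ) 1, IsDiffeo n (fun p => H (t, s, p))) ∧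
      (∀ s ∈ Icc (0:ℝ) 1, ∀ p, H (0, s, p) = p ∧ H (1, s, p) = p) ∧
      (∀ t ∈ Icc (0:ℝ) 1, ∀ p, H (t, 1, p) = p) ∧
      (∀ s ∈ Ico (0:ℝ) 1, ∀ t ∈ Icc (0:ℝ) 1, ∀ q,
        0 < α₀ n (H (t, s, q)) (deriv (fun t' => H (t', s, q)) t)) := by

  refine ⟨fun w => PLC_F n ⟨0, hn⟩ w.1 w.2.1 w.2.2, PLC_contDiff_H n ⟨0, hn⟩, ?_, ?_, ?_, ?_⟩
  · intro t _ s _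
    exact PLC_isDiffeo n ⟨0, hn⟩ t s
  · intro s _ p
    exact ⟨PLC_F_zero n ⟨0, hn⟩ s p, PLC_F_one n ⟨0, hn⟩ s p⟩
  · intro t _ p
    exact PLC_F_s_one n ⟨0, hn⟩ t p
  · intro s hs t _ q
    exact PLC_positivity n ⟨0, hn⟩ t s hs.2 q
end
end

section
/- Let ε > 0 and let f = (f_x, f_y, f_z) : ℝ³ → ℝ³ be a smooth map. For p = (x,y,z) define τ₃(p) = (f_z(p) − z + x·(f_y(p) − y))/ε, τ₂(p) = f_y(p) − y − τ₃(p), τ₁(p) = f_x(p) − x, and set Φ₁(p) = (x, y + τ₃(p), z + (ε − x)τ₃(p)) and Φ₂(p) = (x, f_y(p), f_z(p)). Suppose Φ₁ and Φ₂ are bijections of ℝ³. Define A(q) = (q₁ + τ₁(Φ₂^{-1}(q)), q₂, q₃) and B(q) = (q₁, q₂ + σ(q), q₃ − q₁·σ(q)) where σ(q) = τ₂(Φ₁^{-1}(q)). Then B ∘ Φ₁ = Φ₂ and f = A ∘ B ∘ Φ₁, i.e. f(p) = A(B(Φ₁(p))) for all p ∈ ℝ³. -/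
open Set Function

noncomputable section

/-- Writing a smooth map `f : ℝ³ → ℝ³` as a composition `A ∘ B ∘ Φ₁` of
globally defined maps, where `A` and `B` are the flows of `X = ∂ₓ` and `Y = ∂_y − x ∂_z`
reparametrized by `τ₁ ∘ Φ₂⁻¹` and `τ₂ ∘ Φ₁⁻¹`, assuming `Φ₁` and `Φ₂` are bijections of `ℝ³`
(with two-sided inverses `Φ₁inv`, `Φ₂inv`). A point `q ∈ ℝ³` is `(q.1, q.2.1, q.2.2)`. -/
theorem composition_of_reparametrized_flows (ε : ℝ) (hε : 0 < ε)
    (f : ℝ × ℝ × ℝ → ℝ × ℝ × ℝ) (hf : ContDiff ℝ (⊤ : ℕ∞) f)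
    (τ₁ τ₂ τ₃ : ℝ × ℝ × ℝ → ℝ)
    (hτ₃ : ∀ p : ℝ × ℝ × ℝ,
      τ₃ p = ((f p).2.2 - p.2.2 + p.1 * ((f p).2.1 - p.2.1)) / ε)
    (hτ₂ : ∀ p : ℝ × ℝ × ℝ, τ₂ p = (f p).2.1 - p.2.1 - τ₃ p)
    (hτ₁ : ∀ p : ℝ × ℝ × ℝ, τ₁ p = (f p).1 - p.1)
    (Φ₁ Φ₂ : ℝ × ℝ × ℝ → ℝ × ℝ × ℝ)
    (hΦ₁ : ∀ p : ℝ × ℝ × ℝ, Φ₁ p = (p.1, p.2.1 + τ₃ p, p.2.2 + (ε - p.1) * τ₃ p))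
    (hΦ₂ : ∀ p : ℝ × ℝ × ℝ, Φ₂ p = (p.1, (f p).2.1, (f p).2.2))
    (Φ₁inv Φ₂inv : ℝ × ℝ × ℝ → ℝ × ℝ × ℝ)
    (hΦ₁inv : LeftInverse Φ₁inv Φ₁ ∧ RightInverse Φ₁inv Φ₁)
    (hΦ₂inv : LeftInverse Φ₂inv Φ₂ ∧ RightInverse Φ₂inv Φ₂)
    (A B : ℝ × ℝ × ℝ → ℝ × ℝ × ℝ)
    (hA : ∀ q : ℝ × ℝ × ℝ, A q = (q.1 + τ₁ (Φ₂inv q), q.2.1, q.2.2))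
    (hB : ∀ q : ℝ × ℝ × ℝ,
      B q = (q.1, q.2.1 + τ₂ (Φ₁inv q), q.2.2 - q.1 * τ₂ (Φ₁inv q))) :
    B ∘ Φ₁ = Φ₂ ∧ ∀ p : ℝ × ℝ × ℝ, f p = A (B (Φ₁ p)) := by
  have key : ∀ p : ℝ × ℝ × ℝ, B (Φ₁ p) = Φ₂ p := by
    intro p
    have h1 : Φ₁inv (Φ₁ p) = p := hΦ₁inv.1 p
    rw [hB, h1, hΦ₁, hΦ₂, hτ₂ p, hτ₃ p]
    have hε' : ε ≠ 0 := ne_of_gt hε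
    refine Prod.ext rfl (Prod.ext ?_ ?_) <;> simp <;> field_simp <;> ring
  refine ⟨funext key, fun p => ?_⟩
  rw [key p]
  have h2 : Φ₂inv (Φ₂ p) = p := hΦ₂inv.1 p
  rw [hA, h2, hτ₁, hΦ₂]
  exact Prod.ext (by simp) rfl
end
end

section
/- Let n ≥ 1 and c ∈ ℝ. The translation T_c(x,y,z) = (x, y, z + c) of ℝ^{2n+1} (the time-c map of the Reeb flow of the standard contact form) is connected to the identity by a null smooth path of diffeomorphisms: there is a smooth map g : [0,1] × ℝ^{2n+1} → ℝ^{2n+1} such that each g(s,·) is a diffeomorphism, g(0,·) = id, g(1,·) = T_c, and α₀(g(s,q))(∂_s g(s,q)) = 0 for all s, q. -/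
open Set Function

noncomputable section

attribute [local fun_prop] Real.contDiff_sin Real.contDiff_cos

/-- The time-`c` map of the Reeb flow of the standard contact form,
`(x,y,z) ↦ (x,y,z+c)`, is connected to the identity by a null path of diffeomorphisms. -/
theorem reeb_translation_null_path (n : ℕ) (hn : 1 ≤ n) (c : ℝ) :
    ∃ g : ℝ × E n → E n, IsSmoothPath n g ∧ IsNullPath n g ∧
      (∀ p, g (0, p) = p) ∧ (∀ p : E n, g (1, p) = (p.1, p.2.1, p.2.2 + c)) := by
  have hπ : Real.pi ≠ 0 := Real.pi_ne_zero
  set i₀ : Fin n := ⟨0, hn⟩ with hi₀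
  set δ : Fin n → ℝ := fun i => if i = i₀ then 1 else 0 with hδ
  set a : ℝ → ℝ := fun t => -(c/Real.pi) * Real.sin (2*Real.pi*t) with ha
  set b : ℝ → ℝ := fun t => 1 - Real.cos (2*Real.pi*t) with hb
  set φ : ℝ → ℝ := fun t => c*t - (c/(4*Real.pi)) * Real.sin (2*(2*Real.pi*t)) with hφ
  -- derivatives
  have hlin : ∀ t : ℝ, HasDerivAt (fun s : ℝ => 2*Real.pi*s) (2*Real.pi) t := fun t => by
    simpa using (hasDerivAt_id t).const_mul (2*Real.pi)
  have hda : ∀ t, HasDerivAt a (-(c/Real.pi) * (Real.cos (2*Real.pi*t) * (2*Real.pi))) t := by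
    intro t
    exact ((Real.hasDerivAt_sin _).comp t (hlin t)).const_mul _
  have hdb : ∀ t, HasDerivAt b (Real.sin (2*Real.pi*t) * (2*Real.pi)) t := by
    intro t
    have h := ((Real.hasDerivAt_cos _).comp t (hlin t)).const_sub 1
    simpa using h
  have hdφ : ∀ t, HasDerivAt φ (c - (c/(4*Real.pi)) * (Real.cos (2*(2*Real.pi*t)) * (2*(2*Real.pi)))) t := by
    intro t
    have h2 : HasDerivAt (fun s : ℝ => 2*(2*Real.pi*s)) (2*(2*Real.pi)) t := by
      simpa [mul_assoc] using (hasDerivAt_id t).const_mul (2*(2*Real.pi))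
    exact ((hasDerivAt_id t).const_mul c).sub (((Real.hasDerivAt_sin _).comp t h2).const_mul _) |>.congr_deriv (by ring)
  -- the path
  refine ⟨fun tp => (fun i => tp.2.1 i + a tp.1 * δ i,
                     fun i => tp.2.2.1 i + b tp.1 * δ i,
                     tp.2.2.2 - b tp.1 * tp.2.1 i₀ + φ tp.1), ⟨?_, ?_⟩, ?_, ?_, ?_⟩
  · -- smoothness
    refine ContDiff.prodMk ?_ (ContDiff.prodMk ?_ ?_)
    · apply contDiff_pi.2; intro i; fun_prop
    · apply contDiff_pi.2; intro i; fun_prop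
    · fun_prop
  · -- diffeo at each time
    intro t _
    refine ⟨?_, fun p => (fun i => p.1 i - a t * δ i,
                          fun i => p.2.1 i - b t * δ i,
                          p.2.2 + b t * (p.1 i₀ - a t * δ i₀) - φ t), ?_, ?_, ?_⟩
    · refine ContDiff.prodMk ?_ (ContDiff.prodMk ?_ ?_)
      · apply contDiff_pi.2; intro i; fun_prop
      · apply contDiff_pi.2; intro i; fun_prop
      · fun_prop
    · refine ContDiff.prodMk ?_ (ContDiff.prodMk ?_ ?_)
      · apply contDiff_pi.2; intro i; fun_prop
      · apply contDiff_pi.2; intro i; fun_prop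
      · fun_prop
    · intro p
      refine Prod.ext (funext fun i => by ring) (Prod.ext (funext fun i => by ring) ?_)
      simp only [hδ, if_pos rfl]
      ring
    · intro p
      refine Prod.ext (funext fun i => by ring) (Prod.ext (funext fun i => by ring) ?_)
      simp only [hδ, if_pos rfl]
      ring
  · -- null
    intro t _ q
    have hder : HasDerivAt (fun s => ((fun i => q.1 i + a s * δ i,
          fun i => q.2.1 i + b s * δ i,
          q.2.2 - b s * q.1 i₀ + φ s) : E n))
        ((fun i => (-(c/Real.pi) * (Real.cos (2*Real.pi*t) * (2*Real.pi))) * δ i,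
          fun i => (Real.sin (2*Real.pi*t) * (2*Real.pi)) * δ i,
          -(Real.sin (2*Real.pi*t) * (2*Real.pi)) * q.1 i₀ +
            (c - (c/(4*Real.pi)) * (Real.cos (2*(2*Real.pi*t)) * (2*(2*Real.pi)))))) t := by
      refine HasDerivAt.prodMk ?_ (HasDerivAt.prodMk ?_ ?_)
      · exact hasDerivAt_pi.2 fun i => ((hda t).mul_const (δ i)).const_add (q.1 i)
      · exact hasDerivAt_pi.2 fun i => ((hdb t).mul_const (δ i)).const_add (q.2.1 i)
      · exact (((hdb t).mul_const (q.1 i₀)).const_sub q.2.2 |>.add (hdφ t)).congr_deriv (by ring)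
    have hpd := hder.deriv
    unfold pathDeriv α₀
    rw [hpd]
    simp only [hδ, mul_ite, mul_one, mul_zero, ite_mul, zero_mul]
    rw [Finset.sum_ite_eq' Finset.univ i₀]
    simp only [Finset.mem_univ, if_pos, ha]
    have hc2 : Real.cos (2*(2*Real.pi*t)) = 1 - 2 * Real.sin (2*Real.pi*t)^2 := by
      rw [Real.cos_two_mul']
      nlinarith [Real.sin_sq_add_cos_sq (2*Real.pi*t)]
    rw [hc2]
    field_simp
    nlinarith [Real.sin_sq_add_cos_sq (2*Real.pi*t)]
  · intro p
    simp [ha, hb, hφ]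
  · intro p
    have hs : Real.sin (2*(2*Real.pi*1)) = 0 := by
      rw [mul_one, Real.sin_two_mul, Real.sin_two_pi]; ring
    refine Prod.ext (funext fun i => ?_) (Prod.ext (funext fun i => ?_) ?_)
    · simp [ha]
    · simp [hb]
    · simp only [hb, hφ, hs]
      simp
end
end
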